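/- arXiv:1803.00540 — 3 statements merged into one kernel-verified Lean document; each statement's English description precedes it below -/
import Mathlib

section
/- For any permutation x in the alternating group A_N (N ≥ 3), the minimal number of 3-cycles needed to write x as a product of 3-cycles equals (N - ocyc(x))/2, where ocyc(x) is the number of odd cycles of x (counting fixed points as cycles of length 1). -/
open Equiv Equiv.Perm

/-- The word length of `x` with respect to a generating set `T`. -/
noncomputable def lenT {G : Type*} [Group G] (T : Set G) (x : G) : ℕ :=
  sInf {n | ∃ l : List G, (∀ t ∈ l, t ∈ T) ∧ l.prod = x ∧ l.length = n}

/-- The `T`-prefix order. -/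
def leT {G : Type*} [Group G] (T : Set G) (x y : G) : Prop :=
  lenT T y = lenT T x + lenT T (x⁻¹ * y)

/-- The set of 3-cycles of the symmetric group on `Fin N`. -/
def threeCycles (N : ℕ) : Set (Perm (Fin N)) := {σ | σ.IsThreeCycle}

/-- The set of transpositions of the symmetric group on `Fin N`. -/
def transpositions (N : ℕ) : Set (Perm (Fin N)) := {σ | σ.IsSwap}

/-- The number of odd cycles of a permutation, counting fixed points. -/
def ocyc {N : ℕ} (x : Perm (Fin N)) : ℕ :=
  (x.cycleType.filter (fun n => Odd n)).card + (N - x.cycleType.sum)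

/-!
Let `W(y) = ∑ ⌊n / 2⌋` over the cycle lengths `n` of `y` (`cycleWeight`), so that
`N - ocyc y = 2 W(y)`. Multiplying by a transposition merges two cycles or splits one, and `W`
grows (by one) only when two odd cycles merge into an even one. Writing a 3-cycle as `(a b)(b c)`,
the transposition `(a b)` acts on the cycle through `b` just produced by `(b c)`, which is even
whenever `(b c)` raised `W`; so a 3-cycle raises `W` by at most one, and `ℓ₃(x) ≥ W(x)`.
Conversely, if `x` has a cycle `(b c d …)` of length at least three, then `x` is `(b c d)` times
`x` with that cycle shortened by two; otherwise `x = (b c)(d e) ⋯` is a product of at least two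
disjoint transpositions (it is even and nontrivial), and equals `(b c d) · (c d e) ⋯`. Either way
one 3-cycle lowers `W` by one, so `ℓ₃(x) ≤ W(x)`.
-/

theorem Multiset.two_mul_sum_map_div_two_add_card_filter_odd (m : Multiset ℕ) :
    2 * (m.map (· / 2)).sum + (m.filter Odd).card = m.sum := by
  induction m using Multiset.induction_on with
  | empty => simp
  | cons a m ih =>
    by_cases ha : Odd a
    · simp only [Multiset.map_cons, Multiset.sum_cons, Multiset.filter_cons_of_pos _ ha,
        Multiset.card_cons]
      have := Nat.odd_iff.mp ha
      omega
    · simp only [Multiset.map_cons, Multiset.sum_cons, Multiset.filter_cons_of_neg _ ha]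
      have := Nat.odd_iff.not.mp ha
      omega

namespace Equiv.Perm

variable {α : Type*} [DecidableEq α]

theorem formPerm_cons_append_cons (b c : α) (t₁ t₂ : List α)
    (h : (b :: t₁ ++ c :: t₂).Nodup) :
    (b :: t₁ ++ c :: t₂).formPerm = swap b c * (b :: t₁).formPerm * (c :: t₂).formPerm := by
  induction t₁ generalizing b with
  | nil => simp [List.formPerm_cons_cons]
  | cons a t ih =>
    have ih' := ih a (List.nodup_cons.mp h).2
    have hbc : b ≠ c := by grind
    have hac : a ≠ c := by grind
    calc (b :: a :: t ++ c :: t₂).formPerm = swap b a * (a :: t ++ c :: t₂).formPerm :=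
          List.formPerm_cons_cons _ _ _
      _ = swap b a * swap a c * (a :: t).formPerm * (c :: t₂).formPerm := by
          rw [ih', mul_assoc, mul_assoc, mul_assoc]
      _ = swap b c * (b :: a :: t).formPerm * (c :: t₂).formPerm := by
          rw [mul_swap_eq_swap_mul, swap_apply_right, swap_apply_of_ne_of_ne hbc.symm hac.symm,
            List.formPerm_cons_cons, mul_assoc (swap b c)]

theorem formPerm_disjoint_of_forall_mem {l : List α} {r : Perm α} (hr : ∀ u ∈ l, r u = u) :
    l.formPerm.Disjoint r := fun u =>
  if hu : u ∈ l then Or.inr (hr u hu) else Or.inl (List.formPerm_apply_of_notMem hu)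

/-- A nonempty `l` lists one cycle of `y` in cyclic order (a fixed point if `l` is a singleton),
and `r` is the rest of `y`. -/
structure OrbitSplit (y : Perm α) (l : List α) (r : Perm α) : Prop where
  nodup : l.Nodup
  apply_eq_self : ∀ u ∈ l, r u = u
  eq_formPerm_mul : y = l.formPerm * r

theorem OrbitSplit.swap_mul_of_split {y r : Perm α} {b c : α} {t₁ t₂ : List α}
    (h : OrbitSplit y (b :: t₁ ++ c :: t₂) r) :
    OrbitSplit (swap b c * y) (b :: t₁) ((c :: t₂).formPerm * r) := by
  have hnd : (b :: t₁ ++ c :: t₂).Nodup := h.nodup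
  refine ⟨(List.nodup_append.mp hnd).1, fun u hu => ?_, ?_⟩
  · rw [Perm.mul_apply, h.apply_eq_self u (by simp at hu ⊢; tauto),
      List.formPerm_apply_of_notMem fun hu' => (List.nodup_append.mp hnd).2.2 u hu u hu' rfl]
  · rw [h.eq_formPerm_mul, formPerm_cons_append_cons _ _ _ _ hnd]
    simp [mul_assoc]

theorem OrbitSplit.swap_mul_of_merge {y r r₂ : Perm α} {b c : α} {t s : List α}
    (h : OrbitSplit y (b :: t) r) (hs : OrbitSplit r (c :: s) r₂) (hc : c ∉ b :: t) :
    OrbitSplit (swap b c * y) (b :: t ++ c :: s) r₂ := by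
  have hdisj : ∀ u ∈ b :: t, u ∉ c :: s := by
    intro u hu hu'
    have hfix : (c :: s).formPerm u = u := by
      have := h.apply_eq_self u hu
      rwa [hs.eq_formPerm_mul, Perm.mul_apply, hs.apply_eq_self u hu'] at this
    obtain rfl : s = [] := by
      simpa using (List.formPerm_apply_mem_eq_self_iff _ hs.nodup u hu').mp hfix
    exact hc (List.mem_singleton.mp hu' ▸ hu)
  have hnd : (b :: t ++ c :: s).Nodup :=
    List.nodup_append.mpr ⟨h.nodup, hs.nodup, fun u hu v hv huv => hdisj u hu (huv ▸ hv)⟩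
  refine ⟨hnd, fun u hu => ?_, ?_⟩
  · rcases List.mem_append.mp hu with hu | hu
    · have := h.apply_eq_self u hu
      rw [hs.eq_formPerm_mul, Perm.mul_apply] at this
      conv_rhs at this => rw [← List.formPerm_apply_of_notMem (hdisj u hu)]
      exact (c :: s).formPerm.injective this
    · exact hs.apply_eq_self u hu
  · rw [h.eq_formPerm_mul, hs.eq_formPerm_mul, formPerm_cons_append_cons _ _ _ _ hnd]
    simp [mul_assoc]

variable [Fintype α]

def cycleWeight (y : Perm α) : ℕ := (y.cycleType.map (· / 2)).sum

theorem cycleWeight_one : cycleWeight (1 : Perm α) = 0 := by simp [cycleWeight]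

theorem Disjoint.cycleWeight_mul {f g : Perm α} (h : f.Disjoint g) :
    cycleWeight (f * g) = cycleWeight f + cycleWeight g := by
  simp [cycleWeight, h.cycleType_mul]

theorem cycleWeight_formPerm {l : List α} (hl : l.Nodup) :
    cycleWeight l.formPerm = l.length / 2 := by
  by_cases h2 : 2 ≤ l.length
  · have hsupp : l.formPerm.support.card = l.length := by
      rw [List.support_formPerm_of_nodup _ hl (by rintro x rfl; simp at h2),
        List.toFinset_card_of_nodup hl]
    simp [cycleWeight, (List.isCycle_formPerm hl h2).cycleType, hsupp]
  · rw [(List.formPerm_eq_one_iff _ hl).mpr (by omega), cycleWeight_one]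
    omega

theorem OrbitSplit.cycleWeight_eq {y r : Perm α} {l : List α} (h : OrbitSplit y l r) :
    cycleWeight y = l.length / 2 + cycleWeight r := by
  rw [h.eq_formPerm_mul, (formPerm_disjoint_of_forall_mem h.apply_eq_self).cycleWeight_mul,
    cycleWeight_formPerm h.nodup]

theorem exists_orbitSplit (y : Perm α) (b : α) : ∃ t r, OrbitSplit y (b :: t) r := by
  by_cases hb : y b = b
  · exact ⟨[], y, ⟨by simp, by simpa using hb, by simp⟩⟩
  have hsupp : b ∈ y.support := mem_support.mpr hb
  obtain ⟨a, t, ht⟩ :=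
    List.exists_cons_of_ne_nil (toList_eq_nil_iff.not.mpr (not_not.mpr hsupp))
  have hab : a = b := by simpa [ht] using toList_getElem_zero y b hsupp
  subst hab
  refine ⟨t, (y.cycleOf a)⁻¹ * y, ⟨ht ▸ nodup_toList y a, fun u hu => ?_, ?_⟩⟩
  · rw [← ht, mem_toList_iff] at hu
    rw [Perm.mul_apply, Perm.inv_eq_iff_eq, hu.1.cycleOf_apply]
  · rw [← ht, formPerm_toList, mul_inv_cancel_left]

/-- The weight grows only when two odd cycles merge, and then the new cycle through `b` is even. -/
theorem OrbitSplit.exists_swap_mul {y r : Perm α} {b c : α} {t : List α}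
    (h : OrbitSplit y (b :: t) r) (hbc : b ≠ c) :
    ∃ t' r', OrbitSplit (swap b c * y) (b :: t') r' ∧
      cycleWeight (swap b c * y) ≤ cycleWeight y + (b :: t).length % 2 ∧
      cycleWeight (swap b c * y) + (b :: t').length % 2 ≤ cycleWeight y + 1 := by
  by_cases hct : c ∈ t
  · obtain ⟨t₁, t₂, rfl⟩ := List.append_of_mem hct
    have h₁ := OrbitSplit.swap_mul_of_split (t₁ := t₁) h
    have hnd : (b :: t₁ ++ c :: t₂).Nodup := h.nodup
    have h₂ : OrbitSplit ((c :: t₂).formPerm * r) (c :: t₂) r :=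
      ⟨(List.nodup_append.mp hnd).2.1,
        fun u hu => h.apply_eq_self u (by simp [hu]), rfl⟩
    refine ⟨t₁, _, h₁, ?_⟩
    have := h.cycleWeight_eq
    have := h₁.cycleWeight_eq
    have := h₂.cycleWeight_eq
    simp only [List.length_append, List.length_cons] at *
    omega
  · obtain ⟨s, r₂, hs⟩ := exists_orbitSplit r c
    have hm := h.swap_mul_of_merge hs (by simp [hct, Ne.symm hbc])
    refine ⟨t ++ c :: s, r₂, hm, ?_⟩
    have := h.cycleWeight_eq
    have := hs.cycleWeight_eq
    have := hm.cycleWeight_eq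
    simp only [List.length_append, List.length_cons] at *
    omega

theorem IsThreeCycle.cycleWeight_mul_le {σ : Perm α} (hσ : σ.IsThreeCycle) (y : Perm α) :
    cycleWeight (σ * y) ≤ cycleWeight y + 1 := by
  obtain ⟨a, ha⟩ : σ.support.Nonempty :=
    Finset.card_pos.mp (by rw [hσ.card_support]; norm_num)
  have hnd := hσ.nodup_iff_mem_support.mpr ha
  have hab : σ a ≠ a := by grind
  have hbc : σ a ≠ σ (σ a) := by grind
  rw [hσ.eq_swap_mul_swap_iff_mem_support.mpr ha, mul_assoc, swap_comm a]
  obtain ⟨t, r, h⟩ := exists_orbitSplit y (σ a)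
  obtain ⟨t', r', h', -, hz⟩ := h.exists_swap_mul hbc
  obtain ⟨-, -, -, hσz, -⟩ := h'.exists_swap_mul hab
  omega

theorem cycleWeight_prod_le {w : List (Perm α)} (hw : ∀ σ ∈ w, σ.IsThreeCycle) :
    cycleWeight w.prod ≤ w.length := by
  induction w with
  | nil => simp [cycleWeight_one]
  | cons σ w ih =>
    rw [List.prod_cons, List.length_cons]
    have := (hw σ List.mem_cons_self).cycleWeight_mul_le w.prod
    have := ih fun τ hτ => hw τ (List.mem_cons_of_mem σ hτ)
    omega

theorem OrbitSplit.exists_isThreeCycle_mul {x r : Perm α} {b : α} {t : List α}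
    (h : OrbitSplit x (b :: t) r) (hb : x (x b) ≠ b) :
    ∃ σ y, σ.IsThreeCycle ∧ x = σ * y ∧ cycleWeight y < cycleWeight x := by
  have hx : ∀ u ∈ b :: t, x u = (b :: t).formPerm u := fun u hu => by
    rw [h.eq_formPerm_mul, Perm.mul_apply, h.apply_eq_self u hu]
  rcases t with _ | ⟨c, _ | ⟨d, t⟩⟩
  · simp [hx b] at hb
  · simp [hx b, hx c] at hb
  have hnd := h.nodup
  have hy : OrbitSplit ((d :: t).formPerm * r) (d :: t) r :=
    ⟨hnd.of_cons.of_cons, fun u hu => h.apply_eq_self u (by simp_all), rfl⟩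
  refine ⟨swap b c * swap c d, (d :: t).formPerm * r, ?_, ?_, ?_⟩
  · rw [swap_comm b c]
    exact isThreeCycle_swap_mul_swap_same (by grind) (by grind) (by grind)
  · rw [h.eq_formPerm_mul, List.formPerm_cons_cons, List.formPerm_cons_cons, mul_assoc, mul_assoc,
      mul_assoc]
  · have := h.cycleWeight_eq
    have := hy.cycleWeight_eq
    simp only [List.length_cons] at *
    omega

theorem exists_isThreeCycle_mul_swap_mul_swap {b c d e : α} {r : Perm α}
    (hnd : [b, c, d, e].Nodup) (hr : ∀ u ∈ [b, c, d, e], r u = u) :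
    ∃ σ y, σ.IsThreeCycle ∧ swap b c * (swap d e * r) = σ * y ∧
      cycleWeight y < cycleWeight (swap b c * (swap d e * r)) := by
  have hr' : ∀ l : List α, l ⊆ [b, c, d, e] → ∀ u ∈ l, r u = u :=
    fun l hl u hu => hr u (hl hu)
  simp only [List.nodup_cons, List.mem_cons, List.not_mem_nil, or_false, not_or] at hnd
  obtain ⟨⟨hbc, hbd, hbe⟩, ⟨hcd, hce⟩, hde, -⟩ := hnd
  have h₂ : OrbitSplit (swap d e * r) [d, e] r := ⟨by simp [hde], hr' _ (by simp), by simp⟩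
  have hx : OrbitSplit (swap b c * (swap d e * r)) [b, c] (swap d e * r) := by
    refine ⟨by simp [hbc], fun u hu => ?_, by simp⟩
    rw [Perm.mul_apply, hr' _ (by simp) u hu]
    simp only [List.mem_cons, List.not_mem_nil, or_false] at hu
    rcases hu with rfl | rfl <;> simp [swap_apply_of_ne_of_ne, *]
  have hy : OrbitSplit ([c, d, e].formPerm * r) [c, d, e] r :=
    ⟨by simp [*], hr' _ (by simp), rfl⟩
  refine ⟨swap b c * swap c d, [c, d, e].formPerm * r, ?_, ?_, ?_⟩
  · rw [swap_comm b c]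
    exact isThreeCycle_swap_mul_swap_same (Ne.symm hbc) hcd hbd
  · simp only [List.formPerm_cons_cons, List.formPerm_singleton, mul_one, mul_assoc,
      swap_mul_self_mul]
  · have := hx.cycleWeight_eq
    have := h₂.cycleWeight_eq
    have := hy.cycleWeight_eq
    simp only [List.length_cons, List.length_nil] at *
    omega

theorem exists_isThreeCycle_mul_of_involutive {x : Perm α} (hx1 : x ≠ 1) (hx : sign x = 1)
    (hinv : ∀ u, x (x u) = u) :
    ∃ σ y, σ.IsThreeCycle ∧ x = σ * y ∧ cycleWeight y < cycleWeight x := by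
  obtain ⟨b, hb⟩ : ∃ b, x b ≠ b := by
    by_contra! h
    exact hx1 (Perm.ext h)
  generalize hc : x b = c at hb
  have hxc : x c = b := hc ▸ hinv b
  obtain ⟨d, hd⟩ : ∃ d, (swap b c * x) d ≠ d := by
    by_contra! h
    have := congrArg sign (Perm.ext (by simpa using h) : swap b c * x = 1)
    simp [sign_swap (Ne.symm hb), hx] at this
  have hdb : d ≠ b := by rintro rfl; simp [hc] at hd
  have hdc : d ≠ c := by rintro rfl; simp [hxc] at hd
  generalize he : x d = e at hd
  have hxe : x e = d := he ▸ hinv d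
  have hed : e ≠ d := by
    rintro rfl
    rw [Perm.mul_apply, he, swap_apply_of_ne_of_ne hdb hdc] at hd
    exact hd rfl
  have heb : e ≠ b := by rintro rfl; exact hdc (by rw [← hxe, hc])
  have hec : e ≠ c := by rintro rfl; exact hdb (by rw [← hxe, hxc])
  have hfix : ∀ u ∈ [b, c, d, e], (swap d e * (swap b c * x)) u = u := by
    simp only [List.mem_cons, List.not_mem_nil, or_false]
    rintro u (rfl | rfl | rfl | rfl) <;>
      simp [*, swap_apply_of_ne_of_ne, hdb.symm, hdc.symm, heb.symm, hec.symm]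
  have hx : x = swap b c * (swap d e * (swap d e * (swap b c * x))) := by
    simp only [swap_mul_self_mul]
  rw [hx]
  exact exists_isThreeCycle_mul_swap_mul_swap
    (by simp [*, hb.symm, hdb.symm, hdc.symm, hed.symm, heb.symm, hec.symm]) hfix

theorem exists_isThreeCycle_mul_cycleWeight_lt {x : Perm α} (hx1 : x ≠ 1) (hx : sign x = 1) :
    ∃ σ y, σ.IsThreeCycle ∧ x = σ * y ∧ cycleWeight y < cycleWeight x := by
  by_cases hinv : ∀ u, x (x u) = u
  · exact exists_isThreeCycle_mul_of_involutive hx1 hx hinv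
  obtain ⟨b, hb⟩ := not_forall.mp hinv
  obtain ⟨t, r, h⟩ := exists_orbitSplit x b
  exact h.exists_isThreeCycle_mul hb

theorem exists_threeCycle_word (x : Perm α) (hx : sign x = 1) :
    ∃ w : List (Perm α), (∀ σ ∈ w, σ.IsThreeCycle) ∧ w.prod = x ∧
      w.length ≤ cycleWeight x := by
  induction hn : cycleWeight x using Nat.strong_induction_on generalizing x with
  | _ n ih =>
    by_cases hx1 : x = 1
    · exact ⟨[], by simp, by simp [hx1], by simp⟩
    obtain ⟨σ, y, hσ, rfl, hy⟩ := exists_isThreeCycle_mul_cycleWeight_lt hx1 hx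
    rw [sign_mul, hσ.sign, one_mul] at hx
    obtain ⟨w, hw, rfl, hlen⟩ := ih _ (hn ▸ hy) y hx rfl
    refine ⟨σ :: w, ?_, List.prod_cons, ?_⟩
    · simpa [hσ] using hw
    · rw [List.length_cons]
      omega

theorem ocyc_add_two_mul_cycleWeight {N : ℕ} (x : Perm (Fin N)) :
    ocyc x + 2 * cycleWeight x = N := by
  have hsum : x.cycleType.sum ≤ N := by
    simpa [sum_cycleType] using x.support.card_le_univ
  have := x.cycleType.two_mul_sum_map_div_two_add_card_filter_odd
  change (x.cycleType.filter Odd).card + (N - x.cycleType.sum) +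
    2 * (x.cycleType.map (· / 2)).sum = N
  omega

end Equiv.Perm

theorem lenT_eq_of_forall_le {G : Type*} [Group G] {T : Set G} {x : G} {k : ℕ}
    (hex : ∃ l : List G, (∀ t ∈ l, t ∈ T) ∧ l.prod = x ∧ l.length ≤ k)
    (hle : ∀ l : List G, (∀ t ∈ l, t ∈ T) → l.prod = x → k ≤ l.length) :
    lenT T x = k := by
  obtain ⟨l, hT, hprod, hlen⟩ := hex
  have hmem :
      l.length ∈ {n | ∃ l : List G, (∀ t ∈ l, t ∈ T) ∧ l.prod = x ∧ l.length = n} :=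
    ⟨l, hT, hprod, rfl⟩
  refine le_antisymm ((Nat.sInf_le hmem).trans hlen) (le_csInf ⟨_, hmem⟩ ?_)
  rintro n ⟨l, hT, hprod, rfl⟩
  exact hle l hT hprod

theorem stmt0_general (N : ℕ) (x : Perm (Fin N))
    (hx : x ∈ alternatingGroup (Fin N)) :
    lenT (threeCycles N) x = (N - ocyc x) / 2 := by
  have hweight : N - ocyc x = 2 * cycleWeight x := by
    have := ocyc_add_two_mul_cycleWeight x
    omega
  rw [hweight, Nat.mul_div_cancel_left _ two_pos]
  obtain ⟨w, hw, hprod, hlen⟩ := exists_threeCycle_word x (mem_alternatingGroup.mp hx)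
  refine lenT_eq_of_forall_le ⟨w, hw, hprod, hlen⟩ fun l hl hprod => ?_
  exact hprod ▸ cycleWeight_prod_le hl

theorem stmt0 (N : ℕ) (hN : 3 ≤ N) (x : Perm (Fin N))
    (hx : x ∈ alternatingGroup (Fin N)) :
    lenT (threeCycles N) x = (N - ocyc x) / 2 :=
  stmt0_general N x hx
end

section
/- Let x ∈ A_N and let a = (i j k) be a 3-cycle. If i, j, k lie in three pairwise distinct cycles of x of which at least two are odd, then ℓ_3(xa) = ℓ_3(x) + 1. -/
/-!
For `x ∈ A_N` one has `2 ℓ₃(x) + ocyc x = N`. Multiplying by a transposition either merges two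
cycles or splits one, so it changes `ocyc` by `0` or `±2`; a 3-cycle, a product of two
transpositions sharing a point, lowers `ocyc` by at most `2`, and every `x ≠ 1` in `A_N` admits a
3-cycle raising it by exactly `2`. Under the hypotheses the 3-cycle `(i j k)` merges three cycles,
at least two of them odd, into one, so `ocyc` drops by exactly `2`.

To follow `ocyc` through a merge it is written as a sum over points, a point on an odd cycle of
length `L` contributing `1 / L` and a point on an even cycle nothing.
-/
open Equiv Equiv.Perm

/-- The length of the cycle of `x` containing `t` (fixed points count as cycles of length 1). -/
def cycLen {N : ℕ} (x : Perm (Fin N)) (t : Fin N) : ℕ :=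
  if x t = t then 1 else (x.cycleOf t).support.card

open Finset

namespace Equiv.Perm

variable {α : Type*} {f g x : Perm α} {a b i j : α}

theorem SameCycle.mem_of_mapsTo [Finite α] {U : Set α} (h : g.SameCycle a b)
    (hU : Set.MapsTo g U U) (ha : a ∈ U) : b ∈ U := by
  obtain ⟨n, -, rfl⟩ := h.exists_pow_eq'
  exact hU.perm_pow n ha

theorem SameCycle.of_forall_sameCycle_apply [Finite α] (hfg : ∀ s, g.SameCycle s (f s))
    (h : f.SameCycle a b) : g.SameCycle a b := by
  obtain ⟨n, -, rfl⟩ := h.exists_pow_eq'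
  clear h
  induction n with
  | zero => exact SameCycle.refl _ _
  | succ n ih => rw [pow_succ', mul_apply]; exact ih.trans (hfg _)

variable [DecidableEq α]

theorem mul_swap_apply_of_ne_of_ne {s : α} (hi : s ≠ i) (hj : s ≠ j) :
    (x * swap i j) s = x s := by
  rw [mul_apply, swap_apply_of_ne_of_ne hi hj]

theorem sameCycle_mul_swap_of_not_sameCycle [Finite α] (h : ¬x.SameCycle i j) :
    (x * swap i j).SameCycle j i := by
  -- `x * swap i j` sends `j` to `x i` and then follows `x` along the cycle of `i` back to `i`
  have hwalk : ∀ n : ℕ, (x * swap i j).SameCycle j ((x ^ (n + 1)) i) := by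
    intro n
    induction n with
    | zero => simpa using (SameCycle.refl (x * swap i j) j).apply_right
    | succ n ih =>
      rw [pow_succ', mul_apply]
      by_cases hs : (x ^ (n + 1)) i = i
      · simpa [hs] using (SameCycle.refl (x * swap i j) j).apply_right
      · have hsj : (x ^ (n + 1)) i ≠ j := fun hs' =>
          h (hs' ▸ (sameCycle_pow_right.2 (SameCycle.refl x i)))
        rw [← mul_swap_apply_of_ne_of_ne hs hsj]
        exact ih.apply_right
  have hord := orderOf_pos x
  simpa [Nat.sub_add_cancel hord, pow_orderOf_eq_one] using hwalk (orderOf x - 1)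

theorem sameCycle_mul_swap_iff [Finite α] (h : ¬x.SameCycle i j) :
    (x * swap i j).SameCycle a b ↔ x.SameCycle a b ∨
      (x.SameCycle i a ∨ x.SameCycle j a) ∧ (x.SameCycle i b ∨ x.SameCycle j b) := by
  set y := x * swap i j
  have hyi : y i = x j := by simp [y]
  have hyj : y j = x i := by simp [y]
  have hji : y.SameCycle j i := sameCycle_mul_swap_of_not_sameCycle h
  have hxy : ∀ {a b}, x.SameCycle a b → y.SameCycle a b := by
    refine fun hab => hab.of_forall_sameCycle_apply fun s => ?_
    by_cases hsi : s = i
    · subst hsi; rw [← hyj]; exact hji.symm.apply_right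
    by_cases hsj : s = j
    · subst hsj; rw [← hyi]; exact hji.apply_right
    rw [← mul_swap_apply_of_ne_of_ne hsi hsj]
    exact (SameCycle.refl _ _).apply_right
  constructor
  · intro hab
    by_cases ha : x.SameCycle i a ∨ x.SameCycle j a
    · refine Or.inr ⟨ha, hab.mem_of_mapsTo (U := {s | x.SameCycle i s ∨ x.SameCycle j s})
        (fun s hs => ?_) ha⟩
      by_cases hsi : s = i
      · subst hsi; rw [hyi]; exact Or.inr (SameCycle.refl _ _).apply_right
      by_cases hsj : s = j
      · subst hsj; rw [hyj]; exact Or.inl (SameCycle.refl _ _).apply_right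
      rw [mul_swap_apply_of_ne_of_ne hsi hsj]
      exact hs.imp (·.apply_right) (·.apply_right)
    · refine Or.inl (hab.mem_of_mapsTo (U := {s | x.SameCycle a s}) (fun s hs => ?_)
        (SameCycle.refl _ _))
      have hsi : s ≠ i := by rintro rfl; exact ha (Or.inl hs.symm)
      have hsj : s ≠ j := by rintro rfl; exact ha (Or.inr hs.symm)
      show x.SameCycle a (y s)
      rw [mul_swap_apply_of_ne_of_ne hsi hsj]
      exact (hs : x.SameCycle a s).apply_right
  · rintro (hab | ⟨ha, hb⟩)
    · exact hxy hab
    · have hU : ∀ {s}, x.SameCycle i s ∨ x.SameCycle j s → y.SameCycle j s :=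
        fun hs => hs.elim (fun hs => hji.trans (hxy hs)) hxy
      exact (hU ha).symm.trans (hU hb)

theorem not_sameCycle_mul_swap_of_sameCycle [Finite α] (hij : i ≠ j) (h : x.SameCycle i j) :
    ¬(x * swap i j).SameCycle i j := by
  have hex : ∃ m, 0 < m ∧ (x ^ m) i = j := by
    obtain ⟨m, -, hm⟩ := h.exists_pow_eq'
    exact ⟨m, Nat.pos_of_ne_zero (by rintro rfl; exact hij hm), hm⟩
  set m := Nat.find hex
  obtain ⟨hm0, hmj⟩ : 0 < m ∧ (x ^ m) i = j := Nat.find_spec hex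
  have hne : ∀ k, 0 < k → k < m → (x ^ k) i ≠ i ∧ (x ^ k) i ≠ j := by
    refine fun k hk hkm => ⟨fun hki => ?_, fun hkj => Nat.find_min hex hkm ⟨hk, hkj⟩⟩
    refine Nat.find_min hex (show m - k < m by omega) ⟨by omega, ?_⟩
    rw [← hki, ← mul_apply, ← pow_add, Nat.sub_add_cancel hkm.le, hmj]
  -- `j ↦ x i ↦ x ^ 2 i ↦ ⋯ ↦ x ^ m i = j` is a cycle of `x * swap i j` avoiding `i`
  set U := {s | ∃ k, 0 < k ∧ k ≤ m ∧ (x ^ k) i = s}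
  have hU : Set.MapsTo (x * swap i j) U U := by
    rintro s ⟨k, hk, hkm, rfl⟩
    rcases hkm.lt_or_eq with hkm | rfl
    · refine ⟨k + 1, k.succ_pos, hkm, ?_⟩
      rw [mul_swap_apply_of_ne_of_ne (hne k hk hkm).1 (hne k hk hkm).2, pow_succ', mul_apply]
    · exact ⟨1, one_pos, hm0, by simp [hmj]⟩
  intro hy
  obtain ⟨k, hk, hkm, hki⟩ := hy.symm.mem_of_mapsTo hU ⟨m, hm0, le_rfl, hmj⟩
  rcases hkm.lt_or_eq with hkm | rfl
  · exact (hne k hk hkm).1 hki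
  · exact hij (hmj.symm.trans hki).symm

end Equiv.Perm

section CycleLengths

variable {N : ℕ}

theorem card_sameCycle_eq_cycLen (x : Perm (Fin N)) (t : Fin N) :
    #{u | x.SameCycle t u} = cycLen x t := by
  unfold cycLen
  split_ifs with ht
  · rw [card_eq_one]
    refine ⟨t, ext fun u => ?_⟩
    simpa [eq_comm] using ⟨fun h => h.eq_of_left ht, fun h => h ▸ .refl x t⟩
  · congr 1
    ext u
    rw [mem_support_cycleOf_iff]
    simp [ht]

theorem cycLen_eq_of_sameCycle {x : Perm (Fin N)} {s t : Fin N} (h : x.SameCycle s t) :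
    cycLen x s = cycLen x t := by
  rw [← card_sameCycle_eq_cycLen, ← card_sameCycle_eq_cycLen]
  congr 1
  ext u
  simpa using ⟨h.symm.trans, h.trans⟩

theorem cycLen_of_apply_eq {x : Perm (Fin N)} {t : Fin N} (h : x t = t) : cycLen x t = 1 :=
  if_pos h

theorem cycLen_pos (x : Perm (Fin N)) (t : Fin N) : 0 < cycLen x t := by
  rw [← card_sameCycle_eq_cycLen, card_pos]
  exact ⟨t, mem_filter.2 ⟨mem_univ t, .refl x t⟩⟩

theorem cycLen_of_isCycle {σ : Perm (Fin N)} (hσ : σ.IsCycle) (t : Fin N) :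
    cycLen σ t = if σ t = t then 1 else #σ.support := by
  unfold cycLen
  split_ifs with ht
  · rfl
  · rw [hσ.cycleOf_eq ht]

theorem cycLen_mul_of_disjoint {σ τ : Perm (Fin N)} (h : σ.Disjoint τ) (t : Fin N) :
    cycLen (σ * τ) t = if σ t = t then cycLen τ t else cycLen σ t := by
  unfold cycLen
  rw [h.cycleOf_mul_distrib]
  by_cases hσ : σ t = t
  · have hστ : σ (τ t) = τ t := by
      rcases h (τ t) with hστ | hτ
      · exact hστ
      · rw [τ.injective hτ, hσ]
    simp [hσ, hστ, (cycleOf_eq_one_iff σ).2 hσ]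
  · have hτ : τ t = t := (h t).resolve_left hσ
    simp [hσ, hτ, (cycleOf_eq_one_iff τ).2 hτ]

theorem ocyc_mul_of_disjoint {σ τ : Perm (Fin N)} (h : σ.Disjoint τ) :
    ocyc (σ * τ) + N = ocyc σ + ocyc τ := by
  have hsum : σ.cycleType.sum + τ.cycleType.sum ≤ N := by
    rw [sum_cycleType, sum_cycleType, ← card_union_of_disjoint h.disjoint_support]
    simpa using card_le_univ (σ.support ∪ τ.support)
  unfold ocyc
  rw [h.cycleType_mul, Multiset.filter_add, Multiset.card_add, Multiset.sum_add]
  omega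

theorem ocyc_of_isCycle {σ : Perm (Fin N)} (hσ : σ.IsCycle) :
    ocyc σ = #σ.support % 2 + (N - #σ.support) := by
  unfold ocyc
  rw [hσ.cycleType]
  rcases Nat.even_or_odd #σ.support with h | h
  · simp [Multiset.filter_singleton, Nat.not_odd_iff_even.2 h, Nat.even_iff.1 h]
  · simp [Multiset.filter_singleton, h, Nat.odd_iff.1 h]

def oddCycleWeight (x : Perm (Fin N)) (t : Fin N) : ℚ :=
  ((cycLen x t % 2 : ℕ) : ℚ) / cycLen x t

theorem oddCycleWeight_of_apply_eq {x : Perm (Fin N)} {t : Fin N} (h : x t = t) :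
    oddCycleWeight x t = 1 := by
  simp [oddCycleWeight, cycLen_of_apply_eq h]

theorem ocyc_eq_sum_oddCycleWeight (x : Perm (Fin N)) :
    (ocyc x : ℚ) = ∑ t, oddCycleWeight x t := by
  induction x using cycle_induction_on with
  | base_one => simp [ocyc, oddCycleWeight_of_apply_eq (one_apply _)]
  | base_cycles σ hσ =>
    have hL : (#σ.support : ℚ) ≠ 0 := by
      exact_mod_cast (zero_lt_two.trans_le hσ.two_le_card_support).ne'
    have hfix : #{t | σ t = t} + #{t | ¬σ t = t} = N := by
      simpa using card_filter_add_card_filter_not (s := univ) (fun t => σ t = t)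
    have hfix' : (#{t | σ t = t} : ℚ) + #σ.support = N := by exact_mod_cast hfix
    simp only [oddCycleWeight, cycLen_of_isCycle hσ,
      apply_ite (fun n : ℕ => ((n % 2 : ℕ) : ℚ) / n)]
    rw [sum_ite, sum_const, sum_const, ocyc_of_isCycle hσ]
    simp only [nsmul_eq_mul, Nat.one_mod, Nat.cast_one, div_one, mul_one]
    rw [show ({t | ¬σ t = t} : Finset _) = σ.support from rfl, mul_div_cancel₀ _ hL]
    push_cast [show #σ.support ≤ N from card_le_univ _ |>.trans_eq (by simp)]
    linarith
  | induction_disjoint σ τ h _ ihσ ihτ =>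
    have hw : ∀ t,
        oddCycleWeight (σ * τ) t = oddCycleWeight σ t + oddCycleWeight τ t - 1 := by
      intro t
      by_cases hσt : σ t = t
      · rw [oddCycleWeight_of_apply_eq hσt, oddCycleWeight, oddCycleWeight,
          cycLen_mul_of_disjoint h, if_pos hσt]
        ring
      · rw [oddCycleWeight_of_apply_eq ((h t).resolve_left hσt), oddCycleWeight, oddCycleWeight,
          cycLen_mul_of_disjoint h, if_neg hσt]
        ring
    have : (ocyc (σ * τ) : ℚ) + N = ocyc σ + ocyc τ := by
      exact_mod_cast ocyc_mul_of_disjoint h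
    simp only [hw, sum_sub_distrib, sum_add_distrib, ← ihσ, ← ihτ, sum_const, card_univ,
      Fintype.card_fin, nsmul_eq_mul, mul_one]
    linarith

end CycleLengths

section Merge

variable {N : ℕ} {x : Perm (Fin N)} {i j t : Fin N}

theorem sum_sameCycle_oddCycleWeight (x : Perm (Fin N)) (a : Fin N) :
    ∑ t ∈ {u | x.SameCycle a u}, oddCycleWeight x t = (cycLen x a % 2 : ℕ) := by
  unfold oddCycleWeight
  rw [sum_congr rfl fun t ht => by rw [← cycLen_eq_of_sameCycle (mem_filter.1 ht).2], sum_const,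
    card_sameCycle_eq_cycLen, nsmul_eq_mul,
    mul_div_cancel₀ _ (Nat.cast_ne_zero.2 (cycLen_pos x a).ne')]

theorem disjoint_sameCycle_of_not_sameCycle (h : ¬x.SameCycle i j) :
    _root_.Disjoint ({u | x.SameCycle i u} : Finset (Fin N))
      ({u | x.SameCycle j u} : Finset (Fin N)) :=
  disjoint_filter.2 fun _ _ (hi : x.SameCycle i _) hj => h (hi.trans hj.symm)

theorem sameCycle_mul_swap_right_iff (h : ¬x.SameCycle i j) :
    (x * swap i j).SameCycle j t ↔ x.SameCycle i t ∨ x.SameCycle j t := by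
  have := SameCycle.refl x j
  rw [sameCycle_mul_swap_iff h]
  tauto

theorem cycLen_mul_swap_right (h : ¬x.SameCycle i j) :
    cycLen (x * swap i j) j = cycLen x i + cycLen x j := by
  rw [← card_sameCycle_eq_cycLen]
  simp_rw [sameCycle_mul_swap_right_iff h]
  rw [filter_or, card_union_of_disjoint (disjoint_sameCycle_of_not_sameCycle h),
    card_sameCycle_eq_cycLen, card_sameCycle_eq_cycLen]

theorem cycLen_mul_swap_of_not_sameCycle (h : ¬x.SameCycle i j) (hi : ¬x.SameCycle i t)
    (hj : ¬x.SameCycle j t) : cycLen (x * swap i j) t = cycLen x t := by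
  simp_rw [← card_sameCycle_eq_cycLen, sameCycle_mul_swap_iff h, hi, hj]
  simp

theorem ocyc_mul_swap_add_of_not_sameCycle (h : ¬x.SameCycle i j) :
    ocyc (x * swap i j) + cycLen x i % 2 + cycLen x j % 2 =
      ocyc x + (cycLen x i + cycLen x j) % 2 := by
  set p : Fin N → Prop := fun u => x.SameCycle i u ∨ x.SameCycle j u
  set rest := ∑ t ∈ {u | ¬p u}, oddCycleWeight x t
  have hy : (ocyc (x * swap i j) : ℚ) = ((cycLen x i + cycLen x j) % 2 : ℕ) + rest := by
    rw [ocyc_eq_sum_oddCycleWeight, ← sum_filter_add_sum_filter_not univ p,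
      ← cycLen_mul_swap_right h, ← sum_sameCycle_oddCycleWeight]
    congr 1
    · simp_rw [p, sameCycle_mul_swap_right_iff h]
    · refine sum_congr rfl fun t ht => ?_
      obtain ⟨hi, hj⟩ := not_or.1 (mem_filter.1 ht).2
      simp only [oddCycleWeight, cycLen_mul_swap_of_not_sameCycle h hi hj]
  have hx : (ocyc x : ℚ) = (cycLen x i % 2 : ℕ) + (cycLen x j % 2 : ℕ) + rest := by
    rw [ocyc_eq_sum_oddCycleWeight, ← sum_filter_add_sum_filter_not univ p, filter_or,
      sum_union (disjoint_sameCycle_of_not_sameCycle h), sum_sameCycle_oddCycleWeight,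
      sum_sameCycle_oddCycleWeight]
  have : (ocyc (x * swap i j) : ℚ) + (cycLen x i % 2 : ℕ) + (cycLen x j % 2 : ℕ) =
      ocyc x + ((cycLen x i + cycLen x j) % 2 : ℕ) := by
    linarith
  exact_mod_cast this

end Merge

section SwapBounds

variable {N : ℕ} {x : Perm (Fin N)} {i j : Fin N}

theorem ocyc_add_eq_ocyc_mul_swap_add_of_sameCycle (hij : i ≠ j) (h : x.SameCycle i j) :
    ocyc x + cycLen (x * swap i j) i % 2 + cycLen (x * swap i j) j % 2 =
      ocyc (x * swap i j) + (cycLen (x * swap i j) i + cycLen (x * swap i j) j) % 2 := by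
  simpa using ocyc_mul_swap_add_of_not_sameCycle (not_sameCycle_mul_swap_of_sameCycle hij h)

theorem ocyc_le_ocyc_mul_swap_add_right (x : Perm (Fin N)) (i j : Fin N) :
    ocyc x ≤ ocyc (x * swap i j) + 2 * ((cycLen (x * swap i j) j + 1) % 2) := by
  rcases eq_or_ne i j with rfl | hij
  · rw [swap_self, ← Perm.one_def, mul_one]
    omega
  by_cases h : x.SameCycle i j
  · have := ocyc_add_eq_ocyc_mul_swap_add_of_sameCycle hij h
    omega
  · have := ocyc_mul_swap_add_of_not_sameCycle h
    rw [cycLen_mul_swap_right h]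
    omega

theorem ocyc_le_ocyc_mul_swap_add_left (x : Perm (Fin N)) (i j : Fin N) :
    ocyc x ≤ ocyc (x * swap i j) + 2 * (cycLen x i % 2) := by
  rcases eq_or_ne i j with rfl | hij
  · rw [swap_self, ← Perm.one_def, mul_one]
    omega
  by_cases h : x.SameCycle i j
  · have := ocyc_add_eq_ocyc_mul_swap_add_of_sameCycle hij h
    omega
  · have := ocyc_mul_swap_add_of_not_sameCycle h
    omega

/-- Writing `b = swap i j * swap j k`, the first swap can only lower `ocyc` if it leaves `j` on an
even cycle, and then the second one cannot lower it. -/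
theorem ocyc_le_ocyc_mul_add_two (x : Perm (Fin N)) {b : Perm (Fin N)} (hb : b.IsThreeCycle) :
    ocyc x ≤ ocyc (x * b) + 2 := by
  obtain ⟨a, ha⟩ := card_pos.1 (hb.card_support.symm ▸ three_pos : 0 < #b.support)
  rw [(hb.eq_swap_mul_swap_iff_mem_support).2 ha, ← mul_assoc]
  have h₁ := ocyc_le_ocyc_mul_swap_add_right x a (b a)
  have h₂ := ocyc_le_ocyc_mul_swap_add_left (x * swap a (b a)) (b a) (b (b a))
  omega

theorem ocyc_le_ocyc_mul_prod (x : Perm (Fin N)) {l : List (Perm (Fin N))}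
    (hl : ∀ b ∈ l, b.IsThreeCycle) : ocyc x ≤ ocyc (x * l.prod) + 2 * l.length := by
  induction l generalizing x with
  | nil => simp
  | cons b l ih =>
    have h₁ := ocyc_le_ocyc_mul_add_two x (hl b List.mem_cons_self)
    have h₂ := ih (x * b) fun b' hb' => hl b' (List.mem_cons_of_mem b hb')
    rw [List.prod_cons, ← mul_assoc, List.length_cons]
    omega

end SwapBounds

section Splitting

variable {N : ℕ} {x : Perm (Fin N)} {i k : Fin N}

theorem mul_swap_apply_apply_self (x : Perm (Fin N)) (i : Fin N) :
    (x * swap i (x i)) (x i) = x i := by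
  simp

theorem not_sameCycle_mul_swap_apply (hi : x i ≠ i) : ¬(x * swap i (x i)).SameCycle i (x i) :=
  fun h => hi (h.symm.eq_of_left (mul_swap_apply_apply_self x i))

theorem cycLen_mul_swap_apply_add_one (hi : x i ≠ i) :
    cycLen (x * swap i (x i)) i + 1 = cycLen x i := by
  have := cycLen_mul_swap_right (not_sameCycle_mul_swap_apply hi)
  rw [mul_swap_mul_self, cycLen_of_apply_eq (mul_swap_apply_apply_self x i)] at this
  rw [← this, cycLen_eq_of_sameCycle (SameCycle.refl x i).apply_right]

theorem ocyc_add_mul_swap_apply (hi : x i ≠ i) :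
    ocyc x + cycLen (x * swap i (x i)) i % 2 + 1 =
      ocyc (x * swap i (x i)) + (cycLen (x * swap i (x i)) i + 1) % 2 := by
  simpa [cycLen_of_apply_eq (mul_swap_apply_apply_self x i)]
    using ocyc_mul_swap_add_of_not_sameCycle (not_sameCycle_mul_swap_apply hi)

theorem cycLen_eq_two (hk : x k ≠ k) (hkk : x (x k) = k) : cycLen x k = 2 := by
  rw [← card_sameCycle_eq_cycLen, ← card_pair hk.symm]
  congr 1
  ext u
  simp only [mem_filter, mem_univ, true_and, mem_insert, mem_singleton]
  refine ⟨fun h => h.mem_of_mapsTo (U := {k, x k}) ?_ (by simp), ?_⟩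
  · rintro s (rfl | rfl) <;> simp [hkk]
  · rintro (rfl | rfl)
    exacts [.refl x u, (SameCycle.refl x k).apply_right]

theorem exists_isThreeCycle_ocyc_mul_eq_of_apply_apply_ne (hi : x i ≠ i) (hii : x (x i) ≠ i) :
    ∃ b : Perm (Fin N), b.IsThreeCycle ∧ ocyc (x * b) = ocyc x + 2 := by
  -- `b` splits `x i` and `x (x i)` off the cycle of `i` as fixed points
  have hjk : x i ≠ x (x i) := fun h => hi (x.injective h).symm
  have hy : (x * swap i (x i)) i = x (x i) := by simp
  refine ⟨swap i (x i) * swap i (x (x i)),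
    isThreeCycle_swap_mul_swap_same hi.symm hii.symm hjk, ?_⟩
  have h₁ := cycLen_mul_swap_apply_add_one hi
  have h₂ := ocyc_add_mul_swap_apply hi
  have h₃ := cycLen_mul_swap_apply_add_one (hy ▸ hii)
  have h₄ := ocyc_add_mul_swap_apply (hy ▸ hii)
  rw [hy] at h₃ h₄
  rw [← mul_assoc]
  omega

theorem exists_isThreeCycle_ocyc_mul_eq_of_two_cycles (hi : x i ≠ i) (hii : x (x i) = i)
    (hk : x k ≠ k) (hkk : x (x k) = k) (hki : k ≠ i) (hkj : k ≠ x i) :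
    ∃ b : Perm (Fin N), b.IsThreeCycle ∧ ocyc (x * b) = ocyc x + 2 := by
  -- `b` splits the 2-cycle `(i (x i))` into fixed points and attaches `x i` to the 2-cycle of `k`
  have h₁ := ocyc_add_mul_swap_apply hi
  have hyj := mul_swap_apply_apply_self x i
  set j := x i
  have hxki : x k ≠ i := fun h => hkj (by rw [← hkk, h])
  have hxkj : x k ≠ j := fun h => hki (x.injective h)
  set y := x * swap i j
  have hyi : y i = i := by simp [y, hii]
  have hyk : y k = x k := mul_swap_apply_of_ne_of_ne hki hkj
  have hjk : ¬y.SameCycle j k := fun h => hkj (h.eq_of_left hyj).symm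
  refine ⟨swap i j * swap j k, ?_, ?_⟩
  · rw [swap_comm i j]
    exact isThreeCycle_swap_mul_swap_same hi hkj.symm hki.symm
  have h₂ := ocyc_mul_swap_add_of_not_sameCycle hjk
  rw [cycLen_of_apply_eq hyi] at h₁
  rw [cycLen_of_apply_eq hyj, cycLen_eq_two (hyk ▸ hk)
    (by rw [hyk, mul_swap_apply_of_ne_of_ne hxki hxkj, hkk])] at h₂
  rw [← mul_assoc]
  change ocyc (y * swap j k) = ocyc x + 2
  omega

theorem exists_isThreeCycle_ocyc_mul_eq (hx : x ∈ alternatingGroup (Fin N)) (hx1 : x ≠ 1) :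
    ∃ b : Perm (Fin N), b.IsThreeCycle ∧ ocyc (x * b) = ocyc x + 2 := by
  obtain ⟨i, hi⟩ : ∃ i, x i ≠ i := not_forall.1 fun h => hx1 (Equiv.ext h)
  by_cases hii : x (x i) = i
  swap
  · exact exists_isThreeCycle_ocyc_mul_eq_of_apply_apply_ne hi hii
  obtain ⟨k, hki, hkj, hk⟩ : ∃ k, k ≠ i ∧ k ≠ x i ∧ x k ≠ k := by
    by_contra! hfix
    have hswap : x = swap i (x i) := Equiv.ext fun t => by
      by_cases hti : t = i; · simp [hti]
      by_cases htj : t = x i; · simp [htj, hii]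
      rw [hfix t hti htj, swap_apply_of_ne_of_ne hti htj]
    have hsign := mem_alternatingGroup.1 hx
    rw [hswap, sign_swap hi.symm] at hsign
    exact absurd hsign (by decide)
  by_cases hkk : x (x k) = k
  · exact exists_isThreeCycle_ocyc_mul_eq_of_two_cycles hi hii hk hkk hki hkj
  · exact exists_isThreeCycle_ocyc_mul_eq_of_apply_apply_ne hk hkk

end Splitting

section WordLength

variable {G : Type*} [Group G] {T : Set G} {x b : G}

theorem lenT_le_length {l : List G} (hl : ∀ t ∈ l, t ∈ T) : lenT T l.prod ≤ l.length :=
  Nat.sInf_le ⟨l, hl, rfl, rfl⟩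

theorem exists_prod_eq_length_eq_lenT (hx : x ∈ Submonoid.closure T) :
    ∃ l : List G, (∀ t ∈ l, t ∈ T) ∧ l.prod = x ∧ l.length = lenT T x := by
  obtain ⟨l, hl, rfl⟩ := Submonoid.exists_list_of_mem_closure hx
  exact Nat.sInf_mem (s := {n | ∃ l' : List G, (∀ t ∈ l', t ∈ T) ∧ l'.prod = l.prod ∧
    l'.length = n}) ⟨l.length, l, hl, rfl, rfl⟩

theorem lenT_one : lenT T (1 : G) = 0 :=
  Nat.eq_zero_of_le_zero (lenT_le_length (l := []) (by simp))

theorem lenT_mul_le (hx : x ∈ Submonoid.closure T) (hb : b ∈ T) :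
    lenT T (x * b) ≤ lenT T x + 1 := by
  obtain ⟨l, hl, rfl, hlen⟩ := exists_prod_eq_length_eq_lenT hx
  have := lenT_le_length (l := l ++ [b]) (T := T) (by simpa [or_imp, forall_and] using ⟨hl, hb⟩)
  simpa [hlen] using this

end WordLength

section ThreeCycleLength

variable {N : ℕ} {x : Perm (Fin N)}

theorem ocyc_one : ocyc (1 : Perm (Fin N)) = N := by
  simp [ocyc]

theorem ocyc_le (x : Perm (Fin N)) : ocyc x ≤ N := by
  have : (ocyc x : ℚ) ≤ ∑ _t : Fin N, 1 := by
    rw [ocyc_eq_sum_oddCycleWeight]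
    refine sum_le_sum fun t _ => div_le_one_of_le₀ ?_ (Nat.cast_nonneg _)
    exact_mod_cast Nat.mod_le _ _
  simpa using this

theorem mem_closure_threeCycles (hx : x ∈ alternatingGroup (Fin N)) :
    x ∈ Submonoid.closure (threeCycles N) := by
  have hinv : threeCycles N ∪ (threeCycles N)⁻¹ = threeCycles N := by
    ext σ
    simp [threeCycles]
  rwa [← hinv, ← Subgroup.closure_toSubmonoid, threeCycles, closure_three_cycles_eq_alternating]

theorem le_ocyc_add_two_mul_lenT (hx : x ∈ alternatingGroup (Fin N)) :
    N ≤ ocyc x + 2 * lenT (threeCycles N) x := by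
  obtain ⟨l, hl, rfl, hlen⟩ := exists_prod_eq_length_eq_lenT (mem_closure_threeCycles hx)
  simpa [ocyc_one, hlen] using ocyc_le_ocyc_mul_prod 1 hl

theorem two_mul_lenT_add_ocyc_le (hx : x ∈ alternatingGroup (Fin N)) :
    2 * lenT (threeCycles N) x + ocyc x ≤ N := by
  induction hn : N - ocyc x using Nat.strong_induction_on generalizing x with
  | _ n ih =>
    by_cases hx1 : x = 1
    · simp [hx1, lenT_one, ocyc_one]
    obtain ⟨b, hb, hocyc⟩ := exists_isThreeCycle_ocyc_mul_eq hx hx1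
    have hxb := mul_mem hx hb.mem_alternatingGroup
    have hle := ih _ (by have := ocyc_le (x * b); omega) hxb rfl
    have hlen : lenT (threeCycles N) x ≤ lenT (threeCycles N) (x * b) + 1 := by
      simpa using lenT_mul_le (mem_closure_threeCycles hxb)
        (show b⁻¹ ∈ threeCycles N from hb.inv)
    omega

theorem two_mul_lenT_add_ocyc (hx : x ∈ alternatingGroup (Fin N)) :
    2 * lenT (threeCycles N) x + ocyc x = N := by
  have := le_ocyc_add_two_mul_lenT hx
  have := two_mul_lenT_add_ocyc_le hx
  omega

end ThreeCycleLength

theorem ocyc_mul_swap_mul_swap_add_two {N : ℕ} {x : Perm (Fin N)} {i j k : Fin N}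
    (hij : ¬x.SameCycle i j) (hjk : ¬x.SameCycle j k) (hik : ¬x.SameCycle i k)
    (hodd : (Odd (cycLen x i) ∧ Odd (cycLen x j))
          ∨ (Odd (cycLen x i) ∧ Odd (cycLen x k))
          ∨ (Odd (cycLen x j) ∧ Odd (cycLen x k))) :
    ocyc (x * (swap i j * swap j k)) + 2 = ocyc x := by
  have hk : ¬(x * swap i j).SameCycle j k := by
    rw [sameCycle_mul_swap_right_iff hij]
    tauto
  have h₁ := ocyc_mul_swap_add_of_not_sameCycle hij
  have h₂ := ocyc_mul_swap_add_of_not_sameCycle hk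
  rw [cycLen_mul_swap_right hij, cycLen_mul_swap_of_not_sameCycle hij hik hjk] at h₂
  rw [← mul_assoc]
  simp only [Nat.odd_iff] at hodd
  omega

theorem stmt4 (N : ℕ) (x : Perm (Fin N)) (hx : x ∈ alternatingGroup (Fin N))
    (i j k : Fin N)
    (hij : ¬ x.SameCycle i j) (hjk : ¬ x.SameCycle j k) (hik : ¬ x.SameCycle i k)
    (hodd : (Odd (cycLen x i) ∧ Odd (cycLen x j))
          ∨ (Odd (cycLen x i) ∧ Odd (cycLen x k))
          ∨ (Odd (cycLen x j) ∧ Odd (cycLen x k))) :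
    lenT (threeCycles N) (x * (Equiv.swap i j * Equiv.swap j k))
      = lenT (threeCycles N) x + 1 := by
  have hne : ∀ {a b}, ¬x.SameCycle a b → a ≠ b := fun h hab => h (hab ▸ .refl x _)
  have hb : (swap i j * swap j k).IsThreeCycle := by
    rw [swap_comm i j]
    exact isThreeCycle_swap_mul_swap_same (hne hij).symm (hne hjk) (hne hik)
  have h₁ := two_mul_lenT_add_ocyc hx
  have h₂ := two_mul_lenT_add_ocyc (mul_mem hx hb.mem_alternatingGroup)
  have h₃ := ocyc_mul_swap_mul_swap_add_two hij hjk hik hodd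
  omega
end

section
/- Fix a positive integer r and integers a_1,...,a_r, b, n, with a = a_1 + ... + a_r. Then Σ over (n_1,...,n_r) of nonnegative integers with n_1+...+n_r = n of Π_{i=1}^r [a_i/(a_i + b n_i)] C(a_i + b n_i, n_i) equals [a/(a+bn)] C(a+bn, n) (a multi-parameter Rothe–Hagen identity). -/
/-!
The summands are the Gould polynomials `A_k(x) = x (x + bk - 1) ⋯ (x + bk - k + 1) / k!`,
which equal `x / (x + bk) * C(x + bk, k)` away from the pole. They satisfy `A_k(0) = [k = 0]` and
the Pascal-type recurrence `A_{k+1}(x + 1) = A_{k+1}(x) + A_k(x + b)`. Hence both sides of the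
convolution `∑_{i+j=n} A_i(x) A_j(y) = A_n(x + y)` obey the same recurrence in `(n, x)`, and it
follows for integral `x` by induction on `n` and then on `x` in both directions. Applying it
`r - 1` times gives the identity.
-/

open Finset

/-- The generalized binomial coefficient `C(x, k) = x(x-1)⋯(x-k+1)/k!` for `x : ℚ`. -/
noncomputable def qchoose (x : ℚ) (k : ℕ) : ℚ :=
  (∏ j ∈ Finset.range k, (x - j)) / (Nat.factorial k : ℚ)

theorem Finset.Nat.sum_antidiagonalTuple_succ {M : Type*} [AddCommMonoid M] (k n : ℕ)
    (F : (Fin (k + 1) → ℕ) → M) :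
    ∑ f ∈ Nat.antidiagonalTuple (k + 1) n, F f
      = ∑ p ∈ antidiagonal n, ∑ g ∈ Nat.antidiagonalTuple k p.2, F (Fin.cons p.1 g) := by
  simp only [Finset.sum, Nat.antidiagonalTuple, Multiset.Nat.antidiagonalTuple,
    List.Nat.antidiagonalTuple, Multiset.map_coe, Multiset.sum_coe, List.flatMap_def,
    List.map_flatten, List.sum_flatten, List.map_map, Function.comp_def]
  rfl

section Gould

variable {K : Type*} [Field K]

noncomputable def gould (b : K) : ℕ → K → K
  | 0, _ => 1
  | k + 1, x => x * (∏ j ∈ range k, (x + b * (k + 1) - (j + 1))) / (k + 1).factorial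

@[simp]
lemma gould_zero (b x : K) : gould b 0 x = 1 := rfl

lemma gould_succ (b x : K) (k : ℕ) :
    gould b (k + 1) x = x * (∏ j ∈ range k, (x + b * (k + 1) - (j + 1))) / (k + 1).factorial :=
  rfl

@[simp]
lemma gould_succ_apply_zero (b : K) (k : ℕ) : gould b (k + 1) 0 = 0 := by
  simp [gould_succ]

lemma gould_succ_add_one [CharZero K] (b x : K) (k : ℕ) :
    gould b (k + 1) (x + 1) = gould b (k + 1) x + gould b k (x + b) := by
  cases k with
  | zero => simp [gould_succ]
  | succ k =>
    -- after splitting off one factor of two of the products, all three share the product `Q`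
    let Q := ∏ j ∈ range k, (x + b * (k + 2) - (j + 1))
    have hL : ∏ j ∈ range (k + 1), (x + 1 + b * ((k + 1 : ℕ) + 1) - (j + 1))
        = Q * (x + b * (k + 2)) := by
      rw [prod_range_succ']
      congr 1
      · exact prod_congr rfl fun j _ => by push_cast; ring
      · push_cast; ring
    have hR : ∏ j ∈ range (k + 1), (x + b * ((k + 1 : ℕ) + 1) - (j + 1))
        = Q * (x + b * (k + 2) - (k + 1)) := by
      rw [prod_range_succ]
      congr 1
      · exact prod_congr rfl fun j _ => by push_cast; ring
      · push_cast; ring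
    have hS : ∏ j ∈ range k, (x + b + b * (k + 1) - (j + 1)) = Q :=
      prod_congr rfl fun j _ => by ring
    have hk : (k : K) + 1 + 1 ≠ 0 := by exact_mod_cast Nat.succ_ne_zero (k + 1)
    have hfact : ((k + 1).factorial : K) ≠ 0 := Nat.cast_ne_zero.mpr (Nat.factorial_ne_zero _)
    rw [gould_succ, gould_succ, gould_succ, hL, hR, hS, Nat.factorial_succ (k + 1)]
    push_cast
    field_simp
    ring

lemma sum_antidiagonal_gould_mul_add_one [CharZero K] (b x y : K) (n : ℕ) :
    ∑ p ∈ antidiagonal (n + 1), gould b p.1 (x + 1) * gould b p.2 y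
      = ∑ p ∈ antidiagonal (n + 1), gould b p.1 x * gould b p.2 y
        + ∑ p ∈ antidiagonal n, gould b p.1 (x + b) * gould b p.2 y := by
  simp only [Nat.sum_antidiagonal_succ, gould_zero, gould_succ_add_one, add_mul, sum_add_distrib]
  ring

theorem sum_antidiagonal_gould_mul_gould [CharZero K] (b : ℤ) (y : K) (n : ℕ) (x : ℤ) :
    ∑ p ∈ antidiagonal n, gould (b : K) p.1 x * gould (b : K) p.2 y = gould (b : K) n (x + y) := by
  induction n generalizing x with
  | zero => simp
  | succ n ihn =>
    have hstep (x : ℤ) :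
        ∑ p ∈ antidiagonal (n + 1), gould (b : K) p.1 (x + 1 : ℤ) * gould (b : K) p.2 y
          = ∑ p ∈ antidiagonal (n + 1), gould (b : K) p.1 x * gould (b : K) p.2 y
          + gould (b : K) n ((x + b : ℤ) + y) := by
      rw [Int.cast_add, Int.cast_one, sum_antidiagonal_gould_mul_add_one, ← Int.cast_add, ihn]
    have hrec (x : ℤ) : gould (b : K) (n + 1) ((x + 1 : ℤ) + y)
        = gould (b : K) (n + 1) (x + y) + gould (b : K) n ((x + b : ℤ) + y) := by
      push_cast
      rw [add_right_comm, gould_succ_add_one, add_right_comm (x : K)]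
    induction x using Int.inductionOn' (b := 0) with
    | zero => simp [Nat.sum_antidiagonal_succ]
    | succ x _ ihx => rw [hstep, ihx, hrec]
    | pred x _ ihx =>
      have hstep' := hstep (x - 1)
      have hrec' := hrec (x - 1)
      rw [sub_add_cancel, ihx] at hstep'
      rw [sub_add_cancel] at hrec'
      linear_combination hrec' - hstep'

theorem sum_antidiagonalTuple_prod_gould [CharZero K] (b : ℤ) (r : ℕ) (a : Fin r → ℤ) (n : ℕ) :
    ∑ f ∈ Nat.antidiagonalTuple r n, ∏ i, gould (b : K) (f i) (a i)
      = gould (b : K) n (∑ i, (a i : K)) := by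
  induction r generalizing n with
  | zero => cases n <;> simp
  | succ r ih =>
    simp_rw [Nat.sum_antidiagonalTuple_succ, Fin.prod_univ_succ, Fin.cons_zero, Fin.cons_succ,
      ← mul_sum, ih, Fin.sum_univ_succ, ← sum_antidiagonal_gould_mul_gould]

theorem div_mul_qchoose_eq_gould (b x : ℚ) (k : ℕ) (h : x + b * k ≠ 0) :
    x / (x + b * k) * qchoose (x + b * k) k = gould b k x := by
  cases k with
  | zero =>
    simp only [Nat.cast_zero, mul_zero, add_zero] at h ⊢
    simp [qchoose, div_self h]
  | succ k =>
    rw [qchoose, gould_succ, prod_range_succ']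
    push_cast at h ⊢
    field_simp
    ring

end Gould

theorem stmt16_general (r : ℕ) (a : Fin r → ℤ) (b : ℤ) (n : ℕ)
    (hden : ∀ (i : Fin r) (k : ℕ), k ≤ n → (a i : ℚ) + (b : ℚ) * k ≠ 0)
    (hden' : ((∑ i, a i : ℤ) : ℚ) + (b : ℚ) * n ≠ 0) :
    ∑ f ∈ Finset.Nat.antidiagonalTuple r n,
      ∏ i, ((a i : ℚ) / ((a i : ℚ) + (b : ℚ) * f i))
        * qchoose ((a i : ℚ) + (b : ℚ) * f i) (f i)
    = (((∑ i, a i : ℤ) : ℚ) / (((∑ i, a i : ℤ) : ℚ) + (b : ℚ) * n))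
        * qchoose (((∑ i, a i : ℤ) : ℚ) + (b : ℚ) * n) n := by
  have hterm : ∀ f ∈ Nat.antidiagonalTuple r n, ∀ i,
      (a i : ℚ) / (a i + b * f i) * qchoose (a i + b * f i) (f i) = gould (b : ℚ) (f i) (a i) :=
    fun f hf i ↦ div_mul_qchoose_eq_gould _ _ _ <| hden i (f i) <|
      (Nat.mem_antidiagonalTuple.mp hf) ▸ single_le_sum (fun j _ ↦ Nat.zero_le (f j)) (mem_univ i)
  rw [sum_congr rfl fun f hf ↦ prod_congr rfl fun i _ ↦ hterm f hf i,
    sum_antidiagonalTuple_prod_gould, div_mul_qchoose_eq_gould _ _ _ hden', Int.cast_sum]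

/-- Multi-parameter Rothe–Hagen identity. -/
theorem stmt16 (r : ℕ) (hr : 0 < r) (a : Fin r → ℤ) (b : ℤ) (n : ℕ)
    (hden : ∀ (i : Fin r) (k : ℕ), k ≤ n → (a i : ℚ) + (b : ℚ) * k ≠ 0)
    (hden' : ((∑ i, a i : ℤ) : ℚ) + (b : ℚ) * n ≠ 0) :
    ∑ f ∈ Finset.Nat.antidiagonalTuple r n,
      ∏ i, ((a i : ℚ) / ((a i : ℚ) + (b : ℚ) * f i))
        * qchoose ((a i : ℚ) + (b : ℚ) * f i) (f i)
    = (((∑ i, a i : ℤ) : ℚ) / (((∑ i, a i : ℤ) : ℚ) + (b : ℚ) * n))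
        * qchoose (((∑ i, a i : ℤ) : ℚ) + (b : ℚ) * n) n :=
  stmt16_general r a b n hden hden'
end
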